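/- For all real numbers γ₁, γ₂ and every i ∈ {0, 2, 4}, the lines ℓ⁺ = {(γ₁/√3)·x^i + (γ₂/√3)·x^{i+1} + λ·x^i : λ ∈ ℝ} and ℓ⁻ = {−(γ₁/√3)·x^i − (γ₂/√3)·x^{i+1} + λ·x^i : λ ∈ ℝ} are in the same Δ₀-orbit (i.e., there exists t ∈ Δ₀ with ℓ⁻ = {z + t : z ∈ ℓ⁺}) if and only if 2γ₂ ∈ G. -/

import Mathlib

/-- `x = exp(πi/6)`, a primitive 12th root of unity. -/
noncomputable def x : ℂ := Complex.exp (Real.pi * Complex.I / 6)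

/-- `G = ℤ[√3]` as a subset of `ℝ`. -/
def G : Set ℝ := {r | ∃ a b : ℤ, r = a + b * Real.sqrt 3}

/-- `Δ₀ = (1/√3)·ℤ[x]`, the additive subgroup of `ℂ` generated by
`(1/√3)·x^k`, `0 ≤ k ≤ 5`. -/
def Delta0 : Set ℂ :=
  {z | ∃ n : Fin 6 → ℤ,
    z = ∑ k : Fin 6, (n k : ℂ) * ((1 / (Real.sqrt 3 : ℂ)) * x ^ (k : ℕ))}

/-!
Translating ℓ⁺ by `t` gives ℓ⁻ exactly when `t + 2p` lies on the real line through `x^i`, where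
`p = (γ₁ x^i + γ₂ x^(i+1))/√3`; since `Im x = 1/2`, this says `Im (t / x^i) = -γ₂/√3`.
Multiplication by the unit `x` of `ℤ[x]` permutes `Δ₀`, so the question is whether `-γ₂/√3` is
the imaginary part of an element of `Δ₀`. The imaginary parts of `1, x, …, x^5` are
`0, 1/2, √3/2, 1, √3/2, 1/2`, so those of `Δ₀` form `G / (2√3)`.
-/

open Complex

theorem line_eq_image_add_line_iff (p q v t : ℂ) :
    {z : ℂ | ∃ lam : ℝ, z = q + lam * v} = (· + t) '' {z : ℂ | ∃ lam : ℝ, z = p + lam * v} ↔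
      ∃ lam : ℝ, p + t - q = lam * v := by
  constructor
  · intro h
    obtain ⟨lam, hlam⟩ : p + t ∈ {z : ℂ | ∃ lam : ℝ, z = q + lam * v} :=
      h ▸ ⟨p, ⟨0, by simp⟩, rfl⟩
    exact ⟨lam, by rw [hlam]; ring⟩
  · rintro ⟨μ, hμ⟩
    ext z
    constructor
    · rintro ⟨lam, rfl⟩
      exact ⟨p + ↑(lam - μ) * v, ⟨lam - μ, rfl⟩, by push_cast; linear_combination hμ⟩
    · rintro ⟨_, ⟨lam, rfl⟩, rfl⟩
      exact ⟨lam + μ, by push_cast; linear_combination hμ⟩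

theorem exists_ofReal_mul_iff_im_div_eq_zero {w v : ℂ} (hv : v ≠ 0) :
    (∃ lam : ℝ, w = lam * v) ↔ (w / v).im = 0 := by
  constructor
  · rintro ⟨lam, rfl⟩
    simp [hv]
  · intro h
    refine ⟨(w / v).re, ?_⟩
    rw [← div_eq_iff hv]
    exact Complex.ext (by simp) (by simp [h])

theorem x_eq : x = ⟨√3 / 2, 1 / 2⟩ := by
  apply Complex.ext <;> simp [x, Complex.exp_re, Complex.exp_im]

theorem x_ne_zero : x ≠ 0 := Complex.exp_ne_zero _

theorem x_sq : x ^ 2 = ⟨1 / 2, √3 / 2⟩ := by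
  have h3 : √3 * √3 = 3 := Real.mul_self_sqrt (by norm_num)
  apply Complex.ext <;> simp [x_eq, pow_two] <;> linarith

theorem x_pow_three : x ^ 3 = I := by
  have h3 : √3 * √3 = 3 := Real.mul_self_sqrt (by norm_num)
  rw [pow_succ, x_sq, x_eq]
  apply Complex.ext
  · simp; ring
  · simp; linear_combination h3 / 4

theorem x_pow_six : x ^ 6 = -1 := by
  rw [show 6 = 3 * 2 by rfl, pow_mul, x_pow_three, I_sq]

theorem x_pow_twelve : x ^ 12 = 1 := by
  rw [show 12 = 6 * 2 by rfl, pow_mul, x_pow_six]; norm_num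

theorem neg_mem_G {r : ℝ} (hr : r ∈ G) : -r ∈ G := by
  obtain ⟨a, b, rfl⟩ := hr
  exact ⟨-a, -b, by push_cast; ring⟩

theorem neg_mem_G_iff {r : ℝ} : -r ∈ G ↔ r ∈ G :=
  ⟨fun h => neg_neg r ▸ neg_mem_G h, neg_mem_G⟩

theorem mul_x_mem_Delta0 {t : ℂ} (ht : t ∈ Delta0) : t * x ∈ Delta0 := by
  obtain ⟨n, rfl⟩ := ht
  refine ⟨![-n 5, n 0, n 1, n 2, n 3, n 4], ?_⟩
  simp [Fin.sum_univ_six]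
  linear_combination (n 5 / (√3 : ℂ)) * x_pow_six

theorem mul_x_pow_mem_Delta0 {t : ℂ} (ht : t ∈ Delta0) (k : ℕ) : t * x ^ k ∈ Delta0 := by
  induction k with
  | zero => simpa using ht
  | succ k ih => simpa [pow_succ, ← mul_assoc] using mul_x_mem_Delta0 ih

theorem exists_mem_Delta0_iff_exists_mul_x_pow (P : ℂ → Prop) (i : ℕ) :
    (∃ t ∈ Delta0, P t) ↔ ∃ s ∈ Delta0, P (s * x ^ i) := by
  refine ⟨fun ⟨t, ht, hP⟩ => ⟨t * x ^ (11 * i), mul_x_pow_mem_Delta0 ht _, ?_⟩,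
    fun ⟨s, hs, hP⟩ => ⟨_, mul_x_pow_mem_Delta0 hs i, hP⟩⟩
  rwa [mul_assoc, ← pow_add, show 11 * i + i = 12 * i by ring, pow_mul, x_pow_twelve, one_pow,
    mul_one]

theorem two_mul_sqrt_three_mul_im_Delta0 (n : Fin 6 → ℤ) :
    2 * √3 * (∑ k : Fin 6, (n k : ℂ) * ((1 / (√3 : ℂ)) * x ^ (k : ℕ))).im =
      (n 1 + 2 * n 3 + n 5 : ℤ) + (n 2 + n 4 : ℤ) * √3 := by
  have h4 : x ^ 4 = I * x := by rw [← x_pow_three]; ring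
  have h5 : x ^ 5 = I * x ^ 2 := by rw [← x_pow_three]; ring
  simp [Fin.sum_univ_six, h4, h5, x_pow_three, x_sq]
  simp [x_eq]
  field_simp
  linear_combination (n 1 + 2 * n 3 + n 5 + √3 * (n 2 + n 4) : ℝ) *
    Real.sq_sqrt (show (0 : ℝ) ≤ 3 by norm_num)

theorem exists_mem_Delta0_im_eq_iff (r : ℝ) : (∃ s ∈ Delta0, s.im = r) ↔ 2 * √3 * r ∈ G := by
  constructor
  · rintro ⟨s, ⟨n, rfl⟩, rfl⟩
    exact ⟨_, _, two_mul_sqrt_three_mul_im_Delta0 n⟩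
  · rintro ⟨a, b, hab⟩
    refine ⟨_, ⟨![0, a, b, 0, 0, 0], rfl⟩, mul_left_cancel₀ (by positivity : 2 * √3 ≠ 0) ?_⟩
    simpa [hab] using two_mul_sqrt_three_mul_im_Delta0 ![0, a, b, 0, 0, 0]

theorem im_offset_div_x_pow (a b : ℝ) (s : ℂ) (i : ℕ) :
    ((a * x ^ i + b * x ^ (i + 1) + s * x ^ i - (-(a * x ^ i) - b * x ^ (i + 1))) / x ^ i).im =
      s.im + b := by
  rw [show a * x ^ i + b * x ^ (i + 1) + s * x ^ i - (-(a * x ^ i) - b * x ^ (i + 1)) =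
      (s + 2 * a + 2 * b * x) * x ^ i by ring, mul_div_cancel_right₀ _ (pow_ne_zero i x_ne_zero)]
  simp [x_eq]
  ring

theorem stmt16_general (γ₁ γ₂ : ℝ) (i : ℕ) :
    (∃ t ∈ Delta0,
      {z : ℂ | ∃ lam : ℝ,
          z = -(((γ₁ : ℂ) / (Real.sqrt 3 : ℂ)) * x ^ i) -
              ((γ₂ : ℂ) / (Real.sqrt 3 : ℂ)) * x ^ (i + 1) + (lam : ℂ) * x ^ i} =
        (fun z => z + t) ''
          {z : ℂ | ∃ lam : ℝ,
            z = ((γ₁ : ℂ) / (Real.sqrt 3 : ℂ)) * x ^ i +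
                ((γ₂ : ℂ) / (Real.sqrt 3 : ℂ)) * x ^ (i + 1) + (lam : ℂ) * x ^ i}) ↔
      2 * γ₂ ∈ G := by
  simp only [← ofReal_div]
  simp_rw [line_eq_image_add_line_iff,
    exists_ofReal_mul_iff_im_div_eq_zero (pow_ne_zero i x_ne_zero)]
  rw [exists_mem_Delta0_iff_exists_mul_x_pow _ i]
  simp_rw [im_offset_div_x_pow, add_eq_zero_iff_eq_neg, exists_mem_Delta0_im_eq_iff]
  rw [show 2 * √3 * -(γ₂ / √3) = -(2 * γ₂) by field_simp, neg_mem_G_iff]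

theorem stmt16 (γ₁ γ₂ : ℝ) (i : ℕ) (hi : i ∈ ({0, 2, 4} : Set ℕ)) :
    (∃ t ∈ Delta0,
      {z : ℂ | ∃ lam : ℝ,
          z = -(((γ₁ : ℂ) / (Real.sqrt 3 : ℂ)) * x ^ i) -
              ((γ₂ : ℂ) / (Real.sqrt 3 : ℂ)) * x ^ (i + 1) + (lam : ℂ) * x ^ i} =
        (fun z => z + t) ''
          {z : ℂ | ∃ lam : ℝ,
            z = ((γ₁ : ℂ) / (Real.sqrt 3 : ℂ)) * x ^ i +
                ((γ₂ : ℂ) / (Real.sqrt 3 : ℂ)) * x ^ (i + 1) + (lam : ℂ) * x ^ i}) ↔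
      2 * γ₂ ∈ G :=
  stmt16_general γ₁ γ₂ i
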